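/- arXiv:1610.06341 — 3 statements merged into one kernel-verified Lean document; each statement's English description precedes it below -/
import Mathlib

section
/- Let (X,d) be a metric space. The set of Scott weights satisfies: (1) every representable weight d(−,x) is a Scott weight; (2) arbitrary pointwise suprema of Scott weights are Scott weights; (3) binary pointwise minima of Scott weights are Scott weights; (4) for a Scott weight φ and r ∈ [0,∞], both φ + r and φ ⊖ r are Scott weights. -/
open ENNReal

universe u

structure GMetric (X : Type u) where
  d : X → X → ℝ≥0∞
  refl : ∀ x, d x x = 0
  triangle : ∀ x y z, d x z ≤ d x y + d y z

variable {X : Type u}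

/-- Weight of a generalized metric space. -/
def IsWeight (m : GMetric X) (φ : X → ℝ≥0∞) : Prop := ∀ x y, φ x ≤ φ y + m.d x y

/-- Coweight of a generalized metric space. -/
def IsCoweight (m : GMetric X) (ψ : X → ℝ≥0∞) : Prop := ∀ x y, ψ y ≤ ψ x + m.d x y

/-- The metric on weights: d̄(φ,ψ) = sup_x (ψ x ⊖ φ x). -/
noncomputable def dbar (φ ψ : X → ℝ≥0∞) : ℝ≥0∞ := ⨆ x, ψ x - φ x

/-- A directed index: nonempty, preordered and directed. -/
def DirIdx {ι : Type*} (le : ι → ι → Prop) : Prop :=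
  Nonempty ι ∧ Reflexive le ∧ Transitive le ∧ ∀ i j, ∃ k, le i k ∧ le j k

/-- Forward Cauchy net. -/
def ForwardCauchy {ι : Type*} (m : GMetric X) (le : ι → ι → Prop) (x : ι → X) : Prop :=
  DirIdx le ∧ (⨅ i, ⨆ j, ⨆ (_ : le i j), ⨆ k, ⨆ (_ : le j k), m.d (x j) (x k)) = 0

/-- Yoneda limit of a net. -/
def YonedaLimit {ι : Type*} (m : GMetric X) (le : ι → ι → Prop) (x : ι → X) (a : X) : Prop :=
  ∀ y, m.d a y = ⨅ i, ⨆ j, ⨆ (_ : le i j), m.d (x j) y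

/-- Scott weight. -/
def ScottWeight (m : GMetric X) (φ : X → ℝ≥0∞) : Prop :=
  IsWeight m φ ∧ ∀ (ι : Type u) (le : ι → ι → Prop) (x : ι → X) (a : X),
    ForwardCauchy m le x → YonedaLimit m le x a →
    φ a ≤ ⨅ i, ⨆ j, ⨆ (_ : le i j), φ (x j)

/-- The Scott approach distance. -/
noncomputable def scottDist (m : GMetric X) (x : X) (A : Set X) : ℝ≥0∞ :=
  ⨆ (φ : X → ℝ≥0∞) (_ : ScottWeight m φ ∧ ∀ a ∈ A, φ a = 0), φ x

/-- Tensor product of a weight and a coweight. -/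
noncomputable def tensor (φ ψ : X → ℝ≥0∞) : ℝ≥0∞ := ⨅ x, φ x + ψ x

/-- Flat weight. -/
def FlatWeight (m : GMetric X) (φ : X → ℝ≥0∞) : Prop :=
  IsWeight m φ ∧ (⨅ x, φ x) = 0 ∧
  ∀ ψ₁ ψ₂, IsCoweight m ψ₁ → IsCoweight m ψ₂ →
    tensor φ (fun x => max (ψ₁ x) (ψ₂ x)) = max (tensor φ ψ₁) (tensor φ ψ₂)

/-- Colimit of a weight. -/
def IsColimit (m : GMetric X) (φ : X → ℝ≥0∞) (a : X) : Prop :=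
  ∀ y, dbar φ (fun z => m.d z y) = m.d a y

/-- Compact element. -/
def IsCompactElem (m : GMetric X) (a : X) : Prop :=
  ∀ (ι : Type u) (le : ι → ι → Prop) (x : ι → X) (b : X),
    ForwardCauchy m le x → YonedaLimit m le x b →
    m.d a b = ⨅ i, ⨆ j, ⨆ (_ : le i j), m.d a (x j)

/-- Approach space axioms. -/
def A1 (δ : X → Set X → ℝ≥0∞) : Prop := ∀ x, δ x {x} = 0
def A2 (δ : X → Set X → ℝ≥0∞) : Prop := ∀ x, δ x (∅ : Set X) = ∞
def A3 (δ : X → Set X → ℝ≥0∞) : Prop := ∀ x A B, δ x (A ∪ B) = min (δ x A) (δ x B)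
def A4 (δ : X → Set X → ℝ≥0∞) : Prop := ∀ x A B, δ x A ≤ δ x B + ⨆ b ∈ B, δ b A

/-- Regular function of an approach space. -/
def IsRegularFn (δ : X → Set X → ℝ≥0∞) (φ : X → ℝ≥0∞) : Prop :=
  ∀ x A, φ x - (⨆ a ∈ A, φ a) ≤ δ x A

/-- The Lawvere metric d_L(a,b) = b ⊖ a on [0,∞]. -/
noncomputable def dL : GMetric ℝ≥0∞ where
  d a b := b - a
  refl x := tsub_self x
  triangle x y z := by
    calc z - x ≤ z - y + (y - x) := tsub_le_tsub_add_tsub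
    _ = (y - x) + (z - y) := add_comm _ _

/-- The opposite Lawvere metric d_R(a,b) = a ⊖ b on [0,∞]. -/
noncomputable def dR : GMetric ℝ≥0∞ where
  d a b := a - b
  refl x := tsub_self x
  triangle _ _ _ := tsub_le_tsub_add_tsub

/-- Order on formal balls. -/
def ballLE (m : GMetric X) (p q : X × ℝ≥0∞) : Prop := q.2 + m.d p.1 q.1 ≤ p.2

section LimsupNet

variable {ι : Type*} (le : ι → ι → Prop)

/-- `ScottWeight m φ` asks, definitionally, that `φ a ≤ limsupNet le (φ ∘ x)` for every forward Cauchy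
net `x` with Yoneda limit `a`. -/
noncomputable def limsupNet (f : ι → ℝ≥0∞) : ℝ≥0∞ := ⨅ i, ⨆ j, ⨆ (_ : le i j), f j

variable {le}

theorem limsupNet_mono {f g : ι → ℝ≥0∞} (h : ∀ j, f j ≤ g j) :
    limsupNet le f ≤ limsupNet le g :=
  iInf_mono fun _ => iSup₂_mono fun j _ => h j

theorem limsupNet_add_le (hrefl : ∀ i, le i i) (f : ι → ℝ≥0∞) (r : ℝ≥0∞) :
    limsupNet le f + r ≤ limsupNet le (fun j => f j + r) :=
  le_iInf fun i => calc
    limsupNet le f + r ≤ (⨆ j, ⨆ (_ : le i j), f j) + r := add_le_add_left (iInf_le _ i) r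
    _ = ⨆ j, ⨆ (_ : le i j), (f j + r) := ENNReal.biSup_add' ⟨i, hrefl i⟩ f

theorem limsupNet_sub_le (f : ι → ℝ≥0∞) (r : ℝ≥0∞) :
    limsupNet le f - r ≤ limsupNet le (fun j => f j - r) :=
  le_iInf fun i => calc
    limsupNet le f - r ≤ (⨆ j, ⨆ (_ : le i j), f j) - r := tsub_le_tsub_right (iInf_le _ i) r
    _ = ⨆ j, ⨆ (_ : le i j), (f j - r) := by simp only [ENNReal.iSup_sub]

end LimsupNet

section ForwardCauchy

variable {ι : Type*} {m : GMetric X} {le : ι → ι → Prop} {x : ι → X}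

theorem ForwardCauchy.exists_dist_lt (hC : ForwardCauchy m le x) {ε : ℝ≥0∞} (hε : 0 < ε) :
    ∃ i₀, ∀ j k, le i₀ j → le j k → m.d (x j) (x k) < ε := by
  obtain ⟨i₀, hi₀⟩ := iInf_lt_iff.1 (hC.2 ▸ hε)
  refine ⟨i₀, fun j k hj hk => lt_of_le_of_lt ?_ hi₀⟩
  exact le_iSup₂_of_le j hj (le_iSup₂ (f := fun k (_ : le j k) => m.d (x j) (x k)) k hk)

/-- Late points of a forward Cauchy net are almost below each other, so values of the weights `φ`
and `ψ` attained at two late indices are almost attained by both at a common later index. -/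
theorem ForwardCauchy.min_limsupNet_le {φ ψ : X → ℝ≥0∞} (hC : ForwardCauchy m le x)
    (hφ : IsWeight m φ) (hψ : IsWeight m ψ) :
    min (limsupNet le fun j => φ (x j)) (limsupNet le fun j => ψ (x j)) ≤
      limsupNet le fun j => min (φ (x j)) (ψ (x j)) := by
  obtain ⟨-, -, htrans, hdir⟩ := hC.1
  refine le_iInf fun i => ENNReal.le_of_forall_pos_le_add fun ε hε _ => ?_
  obtain ⟨i₀, hi₀⟩ := hC.exists_dist_lt (ENNReal.coe_pos.2 hε)
  obtain ⟨i₁, hii₁, hi₀i₁⟩ := hdir i i₀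
  calc min (limsupNet le fun j => φ (x j)) (limsupNet le fun j => ψ (x j))
      ≤ (⨆ j, ⨆ (_ : le i₁ j), φ (x j)) ⊓ ⨆ j, ⨆ (_ : le i₁ j), ψ (x j) :=
        min_le_min (iInf_le _ i₁) (iInf_le _ i₁)
    _ ≤ _ := by
      rw [iSup₂_inf_eq]
      refine iSup₂_le fun j₁ hj₁ => ?_
      rw [inf_iSup₂_eq]
      refine iSup₂_le fun j₂ hj₂ => ?_
      obtain ⟨k, hj₁k, hj₂k⟩ := hdir j₁ j₂
      have hd₁ := hi₀ j₁ k (htrans hi₀i₁ hj₁) hj₁k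
      have hd₂ := hi₀ j₂ k (htrans hi₀i₁ hj₂) hj₂k
      calc φ (x j₁) ⊓ ψ (x j₂) ≤ min (φ (x k) + ε) (ψ (x k) + ε) :=
            min_le_min ((hφ _ _).trans (add_le_add_right hd₁.le _))
              ((hψ _ _).trans (add_le_add_right hd₂.le _))
        _ = min (φ (x k)) (ψ (x k)) + ε := min_add_add_right _ _ _
        _ ≤ (⨆ j, ⨆ (_ : le i j), min (φ (x j)) (ψ (x j))) + ε :=
            add_le_add_left (le_iSup₂ (f := fun j (_ : le i j) => min (φ (x j)) (ψ (x j))) k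
              (htrans hii₁ (htrans hj₁ hj₁k))) _

end ForwardCauchy

section Weights

variable (m : GMetric X)

theorem isWeight_dist_left (a : X) : IsWeight m fun z => m.d z a := fun x y =>
  (m.triangle x y a).trans_eq (add_comm _ _)

variable {m}

theorem IsWeight.iSup {ι : Sort*} {f : ι → X → ℝ≥0∞} (hf : ∀ i, IsWeight m (f i)) :
    IsWeight m fun x => ⨆ i, f i x := fun x y =>
  iSup_le fun i => (hf i x y).trans (add_le_add_left (le_iSup (fun i => f i y) i) _)

theorem IsWeight.min {φ ψ : X → ℝ≥0∞} (hφ : IsWeight m φ) (hψ : IsWeight m ψ) :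
    IsWeight m fun x => min (φ x) (ψ x) := fun x y =>
  (min_le_min (hφ x y) (hψ x y)).trans_eq (min_add_add_right _ _ _)

theorem IsWeight.add_const {φ : X → ℝ≥0∞} (hφ : IsWeight m φ) (r : ℝ≥0∞) :
    IsWeight m fun x => φ x + r := fun x y => calc
  φ x + r ≤ φ y + m.d x y + r := add_le_add_left (hφ x y) r
  _ = φ y + r + m.d x y := add_right_comm _ _ _

theorem IsWeight.sub_const {φ : X → ℝ≥0∞} (hφ : IsWeight m φ) (r : ℝ≥0∞) :
    IsWeight m fun x => φ x - r := fun x y => calc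
  φ x - r ≤ φ y + m.d x y - r := tsub_le_tsub_right (hφ x y) r
  _ ≤ φ y - r + m.d x y := add_tsub_le_tsub_add

end Weights

section ScottWeights

variable {m : GMetric X}

variable (m) in
theorem scottWeight_dist_left (a : X) : ScottWeight m fun z => m.d z a :=
  ⟨isWeight_dist_left m a, fun _ _ _ _ _ hY => (hY a).le⟩

theorem ScottWeight.iSup {ι : Sort*} {f : ι → X → ℝ≥0∞} (hf : ∀ i, ScottWeight m (f i)) :
    ScottWeight m fun x => ⨆ i, f i x :=
  ⟨IsWeight.iSup fun i => (hf i).1, fun _ _ _ _ hC hY => iSup_le fun i =>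
    ((hf i).2 _ _ _ _ hC hY).trans (limsupNet_mono fun _ => le_iSup (fun i => f i _) i)⟩

theorem ScottWeight.min {φ ψ : X → ℝ≥0∞} (hφ : ScottWeight m φ) (hψ : ScottWeight m ψ) :
    ScottWeight m fun x => min (φ x) (ψ x) :=
  ⟨hφ.1.min hψ.1, fun _ _ _ _ hC hY =>
    (min_le_min (hφ.2 _ _ _ _ hC hY) (hψ.2 _ _ _ _ hC hY)).trans (hC.min_limsupNet_le hφ.1 hψ.1)⟩

theorem ScottWeight.add_const {φ : X → ℝ≥0∞} (hφ : ScottWeight m φ) (r : ℝ≥0∞) :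
    ScottWeight m fun x => φ x + r :=
  ⟨hφ.1.add_const r, fun _ _ _ _ hC hY =>
    (add_le_add_left (hφ.2 _ _ _ _ hC hY) r).trans (limsupNet_add_le hC.1.2.1 _ r)⟩

theorem ScottWeight.sub_const {φ : X → ℝ≥0∞} (hφ : ScottWeight m φ) (r : ℝ≥0∞) :
    ScottWeight m fun x => φ x - r :=
  ⟨hφ.1.sub_const r, fun _ _ _ _ hC hY =>
    (tsub_le_tsub_right (hφ.2 _ _ _ _ hC hY) r).trans (limsupNet_sub_le _ r)⟩

end ScottWeights

/-- Closure properties of Scott weights. -/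
theorem stmt9 (m : GMetric X) :
    (∀ x : X, ScottWeight m (fun z => m.d z x)) ∧
    (∀ (ι : Type*) (f : ι → X → ℝ≥0∞), (∀ i, ScottWeight m (f i)) →
      ScottWeight m (fun x => ⨆ i, f i x)) ∧
    (∀ φ ψ : X → ℝ≥0∞, ScottWeight m φ → ScottWeight m ψ →
      ScottWeight m (fun x => min (φ x) (ψ x))) ∧
    (∀ (φ : X → ℝ≥0∞) (r : ℝ≥0∞), ScottWeight m φ →
      ScottWeight m (fun x => φ x + r) ∧ ScottWeight m (fun x => φ x - r)) :=
  ⟨scottWeight_dist_left m, fun _ _ => ScottWeight.iSup, fun _ _ => ScottWeight.min,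
    fun _ r hφ => ⟨hφ.add_const r, hφ.sub_const r⟩⟩
end

section
/- For a forward Cauchy net {x_i} in a metric space (X,d), an element x is a Yoneda limit of {x_i} if and only if x is a colimit of the weight φ = inf_i sup_{j≥i} d(−, x_j), i.e., d̄(φ, d(−,y)) = d(x,y) for all y ∈ X. -/
open ENNReal

universe u

variable {X : Type u}

/-!
Write `φ z = limsup_j d(z, x_j)` and `L y = limsup_j d(x_j, y)`; both sides of the equivalence say
`d a y = L y` once we know `d̄(φ, d(-, y)) = L y`. The bound `d̄ ≤ L` is the triangle inequality
through `x_j`, because along a directed index the limsup of a sum is at most the sum of the limsups.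
The bound `L ≤ d̄` comes from `d(x_j, y) ≤ d̄ + φ(x_j)`, since `limsup_j φ(x_j) = 0` is precisely
forward Cauchyness.
-/

noncomputable def netLimsup {ι : Type*} (le : ι → ι → Prop) (f : ι → ℝ≥0∞) : ℝ≥0∞ :=
  ⨅ i, ⨆ j, ⨆ (_ : le i j), f j

section NetLimsup

variable {ι : Type*} {le : ι → ι → Prop}

theorem iSup_tail_anti (htrans : ∀ ⦃i j k⦄, le i j → le j k → le i k) (f : ι → ℝ≥0∞)
    {i k : ι} (hik : le i k) :
    ⨆ j, ⨆ (_ : le k j), f j ≤ ⨆ j, ⨆ (_ : le i j), f j :=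
  iSup₂_le fun j hkj => le_iSup₂_of_le j (htrans hik hkj) le_rfl

theorem le_netLimsup_add (htrans : ∀ ⦃i j k⦄, le i j → le j k → le i k)
    (hdir : ∀ i j, ∃ k, le i k ∧ le j k) {f g : ι → ℝ≥0∞} {c : ℝ≥0∞}
    (hc : ∀ j, c ≤ f j + g j) :
    c ≤ netLimsup le f + netLimsup le g := by
  have hsum : netLimsup le f + netLimsup le g
      = ⨅ i, (⨆ j, ⨆ (_ : le i j), f j) + ⨆ j, ⨆ (_ : le i j), g j := by
    refine ENNReal.iInf_add_iInf fun i j => ?_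
    obtain ⟨k, hik, hjk⟩ := hdir i j
    exact ⟨k, add_le_add (iSup_tail_anti htrans f hik) (iSup_tail_anti htrans g hjk)⟩
  rw [hsum]
  refine le_iInf fun i => ?_
  obtain ⟨k, hik, -⟩ := hdir i i
  exact (hc k).trans (add_le_add (le_iSup₂_of_le k hik le_rfl) (le_iSup₂_of_le k hik le_rfl))

theorem dbar_le_iff {φ ψ : X → ℝ≥0∞} {c : ℝ≥0∞} : dbar φ ψ ≤ c ↔ ∀ z, ψ z ≤ c + φ z := by
  simp only [dbar, iSup_le_iff, tsub_le_iff_right]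

theorem netLimsup_comp_le_dbar_add (φ ψ : X → ℝ≥0∞) (x : ι → X) :
    (netLimsup le fun j => ψ (x j)) ≤ dbar φ ψ + netLimsup le fun j => φ (x j) := by
  rw [netLimsup, netLimsup, ENNReal.add_iInf]
  refine iInf_mono fun i => iSup₂_le fun j hij => ?_
  calc ψ (x j) ≤ dbar φ ψ + φ (x j) := dbar_le_iff.mp le_rfl (x j)
    _ ≤ _ := by gcongr; exact le_iSup₂_of_le (f := fun j _ => φ (x j)) j hij le_rfl

end NetLimsup

section ForwardCauchy

variable {ι : Type*} {m : GMetric X} {le : ι → ι → Prop} {x : ι → X}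

theorem ForwardCauchy.netLimsup_weight_eq_zero (hfc : ForwardCauchy m le x) :
    netLimsup le (fun j => netLimsup le fun k => m.d (x j) (x k)) = 0 :=
  le_antisymm ((iInf_mono fun _ => iSup₂_mono fun j _ => iInf_le _ j).trans_eq hfc.2) bot_le

theorem ForwardCauchy.dbar_weight_eq (hfc : ForwardCauchy m le x) (y : X) :
    dbar (fun z => netLimsup le fun j => m.d z (x j)) (fun z => m.d z y)
      = netLimsup le fun j => m.d (x j) y := by
  obtain ⟨-, -, htrans, hdir⟩ := hfc.1
  refine le_antisymm (dbar_le_iff.mpr fun z => le_netLimsup_add htrans hdir fun j => ?_) ?_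
  · exact (m.triangle z (x j) y).trans_eq (add_comm _ _)
  · simpa only [hfc.netLimsup_weight_eq_zero, add_zero] using
      netLimsup_comp_le_dbar_add (le := le) (fun z => netLimsup le fun j => m.d z (x j))
        (fun z => m.d z y) x

end ForwardCauchy

/-- x is a Yoneda limit of a forward Cauchy net iff x is a colimit of the generated weight. -/
theorem stmt14 {ι : Type*} (m : GMetric X) (le : ι → ι → Prop) (x : ι → X)
    (hfc : ForwardCauchy m le x) (a : X) :
    YonedaLimit m le x a ↔
      IsColimit m (fun y => ⨅ i, ⨆ j, ⨆ (_ : le i j), m.d y (x j)) a :=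
  forall_congr' fun y => by
    change m.d a y = netLimsup le _ ↔ dbar (fun z => netLimsup le _) _ = _
    rw [hfc.dbar_weight_eq, eq_comm]
end

section
/- A weight φ of a metric space (X,d) is a Scott weight if and only if for every flat weight ψ of (X,d) and every colimit x of ψ, d̄(ψ, φ) ≥ φ(x). -/
open ENNReal

universe u

variable {X : Type u}

/-! Both conditions are about limsups along nets, and weights and nets are matched as follows:
if `ψ (x i) → 0` and `limsup_i d(z, x i) ≤ ψ z` for all `z`, then `d̄(ψ, f) = limsup_i f (x i)`
for every weight `f` and `ψ ⊗ χ = limsup_i χ (x i)` for every coweight `χ`. A forward Cauchy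
net `x` is matched with the weight `z ↦ limsup_i d(z, x i)`, which is flat because limsup
commutes with binary max, and whose colimit is the Yoneda limit of `x`. Conversely a flat weight
`ψ` is matched with the net of formal balls `(z, r)` with `ψ z < r`: flatness makes this net
directed, and a colimit of `ψ` is a Yoneda limit of it. -/

open Filter Topology

lemma ENNReal.limsup_add_le' {ι : Type*} (F : Filter ι) (u v : ι → ℝ≥0∞) :
    limsup (u + v) F ≤ limsup u F + limsup v F := by
  refine le_of_forall_gt fun c hc => ?_
  obtain ⟨a, ha, b, hb, hab⟩ := ENNReal.exists_add_lt_of_add_lt hc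
  refine lt_of_le_of_lt (limsup_le_of_le (by isBoundedDefault) ?_) hab
  filter_upwards [eventually_lt_of_limsup_lt ha, eventually_lt_of_limsup_lt hb] with i hu hv
  exact add_le_add hu.le hv.le

section Tails

variable {ι : Type*} {le : ι → ι → Prop}

def tails (le : ι → ι → Prop) : Filter ι := ⨅ i, 𝓟 {j | le i j}

lemma hasBasis_tails (h : DirIdx le) :
    (tails le).HasBasis (fun _ => True) fun i => {j | le i j} := by
  obtain ⟨hne, -, htrans, hdir⟩ := h
  refine hasBasis_iInf_principal fun i j => ?_
  obtain ⟨k, hik, hjk⟩ := hdir i j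
  exact ⟨k, fun l hkl => htrans hik hkl, fun l hkl => htrans hjk hkl⟩

lemma setOf_le_mem_tails (i : ι) : {j | le i j} ∈ tails le :=
  mem_iInf_of_mem i (mem_principal_self _)

lemma tails_neBot (h : DirIdx le) : (tails le).NeBot :=
  (hasBasis_tails h).neBot_iff.2 fun {i} _ => ⟨i, h.2.1 i⟩

lemma iInf_iSup_eq_limsup_tails (h : DirIdx le) (f : ι → ℝ≥0∞) :
    ⨅ i, ⨆ j, ⨆ (_ : le i j), f j = limsup f (tails le) := by
  simp [(hasBasis_tails h).limsup_eq_iInf_iSup]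

end Tails

section Weights

variable (m : GMetric X)

lemma isWeight_d_left (y : X) : IsWeight m fun z => m.d z y :=
  fun z w => (m.triangle z w y).trans_eq (add_comm _ _)

lemma isCoweight_d_left_add (z : X) (c : ℝ≥0∞) : IsCoweight m fun y => m.d z y + c :=
  fun p q =>
    calc m.d z q + c ≤ m.d z p + m.d p q + c := by gcongr; exact m.triangle z p q
      _ = m.d z p + c + m.d p q := add_right_comm _ _ _

lemma IsCoweight.max {χ₁ χ₂ : X → ℝ≥0∞} (h₁ : IsCoweight m χ₁) (h₂ : IsCoweight m χ₂) :
    IsCoweight m fun z => max (χ₁ z) (χ₂ z) := fun z w =>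
  max_le ((h₁ z w).trans (by gcongr; exact le_max_left _ _))
    ((h₂ z w).trans (by gcongr; exact le_max_right _ _))

end Weights

section Approximation

variable {ι : Type*} {F : Filter ι} {x : ι → X} {ψ : X → ℝ≥0∞}

lemma limsup_le_dbar (hψ : Tendsto (ψ ∘ x) F (𝓝 0)) (f : X → ℝ≥0∞) :
    limsup (f ∘ x) F ≤ dbar ψ f :=
  calc limsup (f ∘ x) F ≤ limsup ((fun z => f z - ψ z) ∘ x + ψ ∘ x) F :=
        limsup_le_limsup (Eventually.of_forall fun _ => le_tsub_add)
    _ = limsup ((fun z => f z - ψ z) ∘ x) F := ENNReal.limsup_add_of_right_tendsto_zero hψ _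
    _ ≤ dbar ψ f := limsup_le_iSup.trans (iSup_comp_le (fun z => f z - ψ z) x)

lemma tensor_le_limsup [F.NeBot] (hψ : Tendsto (ψ ∘ x) F (𝓝 0)) (χ : X → ℝ≥0∞) :
    tensor ψ χ ≤ limsup (χ ∘ x) F :=
  calc tensor ψ χ ≤ limsup (ψ ∘ x + χ ∘ x) F :=
        le_limsup_of_frequently_le' (Frequently.of_forall fun i => iInf_le _ (x i))
    _ = limsup (χ ∘ x) F := ENNReal.limsup_add_of_left_tendsto_zero hψ _

variable (m : GMetric X)

lemma dbar_le_limsup [F.NeBot] (hx : ∀ z, limsup (fun i => m.d z (x i)) F ≤ ψ z)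
    {f : X → ℝ≥0∞} (hf : IsWeight m f) : dbar ψ f ≤ limsup (f ∘ x) F :=
  iSup_le fun z => tsub_le_iff_right.2 <|
    calc f z ≤ limsup (f ∘ x + fun i => m.d z (x i)) F :=
          le_limsup_of_frequently_le' (Frequently.of_forall fun i => hf z (x i))
      _ ≤ limsup (f ∘ x) F + limsup (fun i => m.d z (x i)) F := ENNReal.limsup_add_le' _ _ _
      _ ≤ limsup (f ∘ x) F + ψ z := add_le_add_right (hx z) _

lemma limsup_le_tensor [F.NeBot] (hx : ∀ z, limsup (fun i => m.d z (x i)) F ≤ ψ z)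
    {χ : X → ℝ≥0∞} (hχ : IsCoweight m χ) : limsup (χ ∘ x) F ≤ tensor ψ χ :=
  le_iInf fun z =>
    calc limsup (χ ∘ x) F ≤ limsup ((fun _ => χ z) + fun i => m.d z (x i)) F :=
          limsup_le_limsup (Eventually.of_forall fun i => hχ z (x i))
      _ ≤ χ z + limsup (fun i => m.d z (x i)) F := by
          simpa using ENNReal.limsup_add_le' F (fun _ => χ z) fun i => m.d z (x i)
      _ ≤ ψ z + χ z := (add_le_add_right (hx z) _).trans_eq (add_comm _ _)

structure NetApproximates (F : Filter ι) (x : ι → X) (ψ : X → ℝ≥0∞) : Prop where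
  tendsto_zero : Tendsto (ψ ∘ x) F (𝓝 0)
  limsup_le : ∀ z, limsup (fun i => m.d z (x i)) F ≤ ψ z

namespace NetApproximates

variable {m} [F.NeBot]

lemma dbar_eq_limsup (h : NetApproximates m F x ψ) {f : X → ℝ≥0∞} (hf : IsWeight m f) :
    dbar ψ f = limsup (f ∘ x) F :=
  le_antisymm (dbar_le_limsup m h.limsup_le hf) (limsup_le_dbar h.tendsto_zero f)

lemma tensor_eq_limsup (h : NetApproximates m F x ψ) {χ : X → ℝ≥0∞} (hχ : IsCoweight m χ) :
    tensor ψ χ = limsup (χ ∘ x) F :=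
  le_antisymm (tensor_le_limsup h.tendsto_zero χ) (limsup_le_tensor m h.limsup_le hχ)

lemma iInf_eq_zero (h : NetApproximates m F x ψ) : ⨅ z, ψ z = 0 :=
  le_antisymm ((le_limsup_of_frequently_le' (Frequently.of_forall fun i => iInf_le ψ (x i))).trans
    h.tendsto_zero.limsup_eq.le) bot_le

lemma flatWeight (h : NetApproximates m F x ψ) (hψ : IsWeight m ψ) : FlatWeight m ψ := by
  refine ⟨hψ, h.iInf_eq_zero, fun χ₁ χ₂ h₁ h₂ => ?_⟩
  rw [h.tensor_eq_limsup h₁, h.tensor_eq_limsup h₂, h.tensor_eq_limsup (h₁.max m h₂)]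
  exact limsup_max

lemma isColimit (h : NetApproximates m F x ψ) {a : X}
    (ha : ∀ y, m.d a y = limsup (fun i => m.d (x i) y) F) : IsColimit m ψ a :=
  fun y => (h.dbar_eq_limsup (isWeight_d_left m y)).trans (ha y).symm

end NetApproximates

end Approximation

section NetWeight

variable (m : GMetric X) {ι : Type*}

noncomputable def netWeight (F : Filter ι) (x : ι → X) (z : X) : ℝ≥0∞ :=
  limsup (fun i => m.d z (x i)) F

lemma isWeight_netWeight (F : Filter ι) [F.NeBot] (x : ι → X) : IsWeight m (netWeight m F x) :=
  fun z w =>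
    calc limsup (fun i => m.d z (x i)) F ≤ limsup ((fun i => m.d w (x i)) + fun _ => m.d z w) F :=
          limsup_le_limsup (Eventually.of_forall fun i =>
            (m.triangle z w (x i)).trans_eq (add_comm _ _))
      _ ≤ limsup (fun i => m.d w (x i)) F + m.d z w := by
          simpa using ENNReal.limsup_add_le' F (fun i => m.d w (x i)) fun _ => m.d z w

lemma netApproximates_netWeight {le : ι → ι → Prop} {x : ι → X} (hx : ForwardCauchy m le x) :
    NetApproximates m (tails le) x (netWeight m (tails le) x) := by
  obtain ⟨hdir, hcauchy⟩ := hx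
  refine ⟨ENNReal.tendsto_nhds_zero.2 fun ε hε => ?_, fun z => le_rfl⟩
  rw [iInf_iSup_eq_limsup_tails hdir] at hcauchy
  filter_upwards [eventually_lt_of_limsup_lt (hcauchy.trans_lt hε)] with j hj
  calc netWeight m (tails le) x (x j) = ⨅ i, ⨆ k, ⨆ (_ : le i k), m.d (x j) (x k) :=
        (iInf_iSup_eq_limsup_tails hdir _).symm
    _ ≤ ⨆ k, ⨆ (_ : le j k), m.d (x j) (x k) := iInf_le _ j
    _ ≤ ε := hj.le

end NetWeight

section FormalBalls

variable {m : GMetric X}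

lemma ballLE_refl (p : X × ℝ≥0∞) : ballLE m p p := by
  rw [ballLE, m.refl, add_zero]

lemma ballLE_trans {p q r : X × ℝ≥0∞} (hpq : ballLE m p q) (hqr : ballLE m q r) : ballLE m p r :=
  calc r.2 + m.d p.1 r.1 ≤ r.2 + m.d q.1 r.1 + m.d p.1 q.1 := by
        rw [add_assoc, add_comm (m.d q.1 r.1)]; gcongr; exact m.triangle _ _ _
    _ ≤ q.2 + m.d p.1 q.1 := by gcongr; exact hqr
    _ ≤ p.2 := hpq

lemma ballLE.d_le {p q : X × ℝ≥0∞} (h : ballLE m p q) : m.d p.1 q.1 ≤ p.2 :=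
  le_add_self.trans h

lemma ballLE.snd_le {p q : X × ℝ≥0∞} (h : ballLE m p q) : q.2 ≤ p.2 :=
  le_self_add.trans h

end FormalBalls

section WeightBall

variable {m : GMetric X} {ψ : X → ℝ≥0∞}

variable (ψ) in
def WeightBall : Type u := {p : X × ℝ≥0∞ // ψ p.1 < p.2}

variable (m) in
def WeightBall.le (p q : WeightBall ψ) : Prop := ballLE m p.1 q.1

def WeightBall.center (p : WeightBall ψ) : X := p.1.1

lemma FlatWeight.exists_lt (hψ : FlatWeight m ψ) {ε : ℝ≥0∞} (hε : 0 < ε) : ∃ z, ψ z < ε :=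
  iInf_lt_iff.1 (hψ.2.1 ▸ hε)

lemma FlatWeight.exists_lt_lt (hψ : FlatWeight m ψ) {z₁ z₂ : X} {r₁ r₂ : ℝ≥0∞}
    (h₁ : ψ z₁ < r₁) (h₂ : ψ z₂ < r₂) (hr₁ : r₁ ≠ ⊤) (hr₂ : r₂ ≠ ⊤) :
    ∃ y, ψ y + m.d z₁ y < r₁ ∧ ψ y + m.d z₂ y < r₂ := by
  have htensor : ∀ {z : X} {r : ℝ≥0∞} (c : ℝ≥0∞), ψ z < r → c ≠ ⊤ →
      tensor ψ (fun y => m.d z y + c) < r + c := fun {z r} c hz hc =>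
    calc tensor ψ (fun y => m.d z y + c) ≤ ψ z + (m.d z z + c) := iInf_le _ z
      _ < r + c := by rw [m.refl, zero_add]; exact ENNReal.add_lt_add_right hc hz
  -- Flatness merges the coweights `d(z₁, -) + r₂` and `d(z₂, -) + r₁`, both below level `r₁ + r₂`.
  have hmax := hψ.2.2 _ _ (isCoweight_d_left_add m z₁ r₂) (isCoweight_d_left_add m z₂ r₁)
  have hlt : tensor ψ (fun y => max (m.d z₁ y + r₂) (m.d z₂ y + r₁)) < r₁ + r₂ := by
    rw [hmax]
    exact max_lt (htensor r₂ h₁ hr₂) ((htensor r₁ h₂ hr₁).trans_eq (add_comm _ _))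
  obtain ⟨y, hy⟩ := iInf_lt_iff.1 hlt
  refine ⟨y, (ENNReal.add_lt_add_iff_right hr₂).1 ?_, (ENNReal.add_lt_add_iff_right hr₁).1 ?_⟩
  · calc ψ y + m.d z₁ y + r₂ ≤ ψ y + max (m.d z₁ y + r₂) (m.d z₂ y + r₁) := by
          rw [add_assoc]; gcongr; exact le_max_left _ _
      _ < r₁ + r₂ := hy
  · calc ψ y + m.d z₂ y + r₁ ≤ ψ y + max (m.d z₁ y + r₂) (m.d z₂ y + r₁) := by
          rw [add_assoc]; gcongr; exact le_max_right _ _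
      _ < r₂ + r₁ := hy.trans_eq (add_comm _ _)

lemma FlatWeight.exists_weightBall_le_le (hψ : FlatWeight m ψ) (p q : WeightBall ψ) :
    ∃ s : WeightBall ψ, WeightBall.le m p s ∧ WeightBall.le m q s := by
  obtain ⟨⟨z₁, r₁⟩, h₁⟩ := p
  obtain ⟨⟨z₂, r₂⟩, h₂⟩ := q
  by_cases hr₁ : r₁ = ⊤
  · exact ⟨⟨(z₂, r₂), h₂⟩, le_top.trans_eq hr₁.symm, ballLE_refl _⟩
  by_cases hr₂ : r₂ = ⊤
  · exact ⟨⟨(z₁, r₁), h₁⟩, ballLE_refl _, le_top.trans_eq hr₂.symm⟩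
  obtain ⟨y, hy₁, hy₂⟩ := hψ.exists_lt_lt h₁ h₂ hr₁ hr₂
  refine ⟨⟨(y, min (r₁ - m.d z₁ y) (r₂ - m.d z₂ y)),
    lt_min (lt_tsub_iff_right.2 hy₁) (lt_tsub_iff_right.2 hy₂)⟩, ?_, ?_⟩
  · calc min (r₁ - m.d z₁ y) (r₂ - m.d z₂ y) + m.d z₁ y ≤ r₁ - m.d z₁ y + m.d z₁ y := by
          gcongr; exact min_le_left _ _
      _ = r₁ := tsub_add_cancel_of_le (le_add_self.trans hy₁.le)
  · calc min (r₁ - m.d z₁ y) (r₂ - m.d z₂ y) + m.d z₂ y ≤ r₂ - m.d z₂ y + m.d z₂ y := by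
          gcongr; exact min_le_right _ _
      _ = r₂ := tsub_add_cancel_of_le (le_add_self.trans hy₂.le)

lemma FlatWeight.dirIdx_weightBall (hψ : FlatWeight m ψ) :
    DirIdx (WeightBall.le m (ψ := ψ)) := by
  obtain ⟨z, hz⟩ := hψ.exists_lt one_pos
  exact ⟨⟨⟨(z, 1), hz⟩⟩, fun p => ballLE_refl p.1, fun _ _ _ => ballLE_trans,
    hψ.exists_weightBall_le_le⟩

lemma FlatWeight.forwardCauchy_weightBall (hψ : FlatWeight m ψ) :
    ForwardCauchy m (WeightBall.le m) (WeightBall.center (ψ := ψ)) := by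
  refine ⟨hψ.dirIdx_weightBall,
    le_antisymm (ENNReal.le_of_forall_pos_le_add fun ε hε _ => ?_) bot_le⟩
  obtain ⟨z, hz⟩ := hψ.exists_lt (ENNReal.coe_pos.2 hε)
  refine iInf_le_of_le ⟨(z, ε), hz⟩ (iSup₂_le fun j hij => iSup₂_le fun k hjk => ?_)
  rw [zero_add]
  exact hjk.d_le.trans hij.snd_le

lemma FlatWeight.netApproximates_weightBall (hψ : FlatWeight m ψ) :
    NetApproximates m (tails (WeightBall.le m)) (WeightBall.center (ψ := ψ)) ψ := by
  refine ⟨ENNReal.tendsto_nhds_zero.2 fun ε hε => ?_, fun z => ?_⟩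
  · obtain ⟨z, hz⟩ := hψ.exists_lt hε
    filter_upwards [setOf_le_mem_tails ⟨(z, ε), hz⟩] with j hj
    exact j.2.le.trans hj.snd_le
  · refine ENNReal.le_of_forall_pos_le_add fun δ hδ hz =>
      limsup_le_of_le (by isBoundedDefault) ?_
    have hzδ : ψ z < ψ z + δ := ENNReal.lt_add_right hz.ne (by simpa using hδ.ne')
    filter_upwards [setOf_le_mem_tails ⟨(z, ψ z + δ), hzδ⟩] with j hj
    exact hj.d_le

end WeightBall

/-- A weight is a Scott weight iff d̄(ψ,φ) ≥ φ(x) for every flat weight ψ with colimit x. -/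
theorem stmt15 (m : GMetric X) (φ : X → ℝ≥0∞) (hφ : IsWeight m φ) :
    ScottWeight m φ ↔
      ∀ ψ : X → ℝ≥0∞, FlatWeight m ψ → ∀ x : X, IsColimit m ψ x → φ x ≤ dbar ψ φ := by
  constructor
  · rintro ⟨-, hScott⟩ ψ hψ a ha
    have hdir := hψ.dirIdx_weightBall
    have : (tails (WeightBall.le m (ψ := ψ))).NeBot := tails_neBot hdir
    have happrox := hψ.netApproximates_weightBall
    have hlim : YonedaLimit m (WeightBall.le m) WeightBall.center a := fun y => by
      rw [iInf_iSup_eq_limsup_tails hdir, ← ha y, happrox.dbar_eq_limsup (isWeight_d_left m y)]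
      rfl
    calc φ a ≤ ⨅ i, ⨆ j, ⨆ (_ : WeightBall.le m i j), φ j.center :=
          hScott _ _ _ a hψ.forwardCauchy_weightBall hlim
      _ = limsup (φ ∘ WeightBall.center) (tails (WeightBall.le m)) :=
          iInf_iSup_eq_limsup_tails hdir _
      _ ≤ dbar ψ φ := limsup_le_dbar happrox.tendsto_zero φ
  · refine fun h => ⟨hφ, fun ι le x a hx ha => ?_⟩
    have : (tails le).NeBot := tails_neBot hx.1
    have happrox := netApproximates_netWeight m hx
    have hcolim : IsColimit m (netWeight m (tails le) x) a :=
      happrox.isColimit fun y => (ha y).trans (iInf_iSup_eq_limsup_tails hx.1 _)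
    calc φ a ≤ dbar (netWeight m (tails le) x) φ :=
          h _ (happrox.flatWeight (isWeight_netWeight m _ x)) a hcolim
      _ = limsup (φ ∘ x) (tails le) := happrox.dbar_eq_limsup hφ
      _ = ⨅ i, ⨆ j, ⨆ (_ : le i j), φ (x j) := (iInf_iSup_eq_limsup_tails hx.1 _).symm
end
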